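/- Let f : [a,b] → ℝ have a continuous derivative on [a,b]. Then ∑_{a < n ≤ b, n ∈ ℤ} f(n) = ∫_a^b f(t) dt + ∫_a^b {t} f'(t) dt − {b} f(b) + {a} f(a), where {x} := x − ⌊x⌋ denotes the fractional part. -/
import Mathlib


open MeasureTheory intervalIntegral

private lemma floor_mul_intervalIntegrable (a b : ℝ) (hab : a ≤ b) (f' : ℝ → ℝ)
    (hcont : ContinuousOn f' (Set.Icc a b)) :
    IntervalIntegrable (fun t => (⌊t⌋ : ℝ) * f' t) volume a b := by
  rw [intervalIntegrable_iff_integrableOn_Ioc_of_le hab]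
  have hint : IntegrableOn f' (Set.Ioc a b) :=
    (hcont.integrableOn_Icc).mono_set Set.Ioc_subset_Icc_self
  refine hint.bdd_mul (c := max |(⌊a⌋ : ℝ)| |(⌊b⌋ : ℝ)|)
    ((measurable_from_top.comp Int.measurable_floor).aestronglyMeasurable) ?_
  rw [ae_restrict_iff' measurableSet_Ioc]
  refine Filter.Eventually.of_forall fun x hx => ?_
  rcases hx with ⟨hx1, hx2⟩
  have h1 : ⌊a⌋ ≤ ⌊x⌋ := Int.floor_le_floor hx1.le
  have h2 : ⌊x⌋ ≤ ⌊b⌋ := Int.floor_le_floor hx2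
  have h1' : (⌊a⌋ : ℝ) ≤ (⌊x⌋ : ℝ) := by exact_mod_cast h1
  have h2' : (⌊x⌋ : ℝ) ≤ (⌊b⌋ : ℝ) := by exact_mod_cast h2
  rw [Real.norm_eq_abs, abs_le]
  constructor
  · have := neg_abs_le ((⌊a⌋ : ℝ))
    have := le_max_left |(⌊a⌋ : ℝ)| |(⌊b⌋ : ℝ)|
    linarith
  · have := le_abs_self ((⌊b⌋ : ℝ))
    have := le_max_right |(⌊a⌋ : ℝ)| |(⌊b⌋ : ℝ)|
    linarith

private lemma floor_mul_integral (f f' : ℝ → ℝ) :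
    ∀ k : ℕ, ∀ a b : ℝ, a ≤ b → ⌊b⌋ = ⌊a⌋ + k →
    (∀ x ∈ Set.Icc a b, HasDerivAt f (f' x) x) →
    ContinuousOn f' (Set.Icc a b) →
    ∫ t in a..b, (⌊t⌋ : ℝ) * f' t =
      (⌊b⌋ : ℝ) * f b - (⌊a⌋ : ℝ) * f a - ∑ n ∈ Finset.Ioc ⌊a⌋ ⌊b⌋, f n := by
  intro k
  induction k with
  | zero =>
    intro a b hab hfl hderiv hcont
    have hfl' : ⌊b⌋ = ⌊a⌋ := by simpa using hfl
    have hIoc : Finset.Ioc ⌊a⌋ ⌊b⌋ = ∅ := by rw [hfl']; simp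
    have hcongr : ∀ t ∈ Set.uIcc a b, (⌊t⌋ : ℝ) * f' t = (⌊a⌋ : ℝ) * f' t := by
      intro t ht
      rw [Set.uIcc_of_le hab] at ht
      have h1 : ⌊a⌋ ≤ ⌊t⌋ := Int.floor_le_floor ht.1
      have h2 : ⌊t⌋ ≤ ⌊b⌋ := Int.floor_le_floor ht.2
      have : ⌊t⌋ = ⌊a⌋ := le_antisymm (hfl' ▸ h2) h1
      rw [this]
    rw [intervalIntegral.integral_congr hcongr, intervalIntegral.integral_const_mul,
      intervalIntegral.integral_eq_sub_of_hasDerivAt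
        (fun x hx => hderiv x (Set.uIcc_of_le hab ▸ hx))
        ((hcont.mono (by rw [Set.uIcc_of_le hab])).intervalIntegrable),
      hIoc, hfl']
    ring
  | succ k ih =>
    intro a b hab hfl hderiv hcont
    set m : ℝ := (⌊a⌋ : ℝ) + 1 with hm
    have ham : a ≤ m := le_of_lt (by simpa [hm] using Int.lt_floor_add_one a)
    have hmb : m ≤ b := by
      have : (⌊a⌋ + 1 : ℤ) ≤ ⌊b⌋ := by omega
      have := Int.le_floor.mp (le_refl ⌊b⌋)
      calc m = ((⌊a⌋ + 1 : ℤ) : ℝ) := by push_cast [hm]; ring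
        _ ≤ (⌊b⌋ : ℝ) := by exact_mod_cast by omega
        _ ≤ b := Int.floor_le b
    have hfm : ⌊m⌋ = ⌊a⌋ + 1 := by
      rw [hm]; exact_mod_cast Int.floor_intCast (⌊a⌋ + 1)
    have hIcc1 : Set.Icc a m ⊆ Set.Icc a b := Set.Icc_subset_Icc_right hmb
    have hIcc2 : Set.Icc m b ⊆ Set.Icc a b := Set.Icc_subset_Icc_left ham
    have hi1 : IntervalIntegrable (fun t => (⌊t⌋ : ℝ) * f' t) volume a m :=
      floor_mul_intervalIntegrable a m ham f' (hcont.mono hIcc1)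
    have hi2 : IntervalIntegrable (fun t => (⌊t⌋ : ℝ) * f' t) volume m b :=
      floor_mul_intervalIntegrable m b hmb f' (hcont.mono hIcc2)
    rw [← intervalIntegral.integral_add_adjacent_intervals hi1 hi2]
    -- first piece
    have hfirst : ∫ t in a..m, (⌊t⌋ : ℝ) * f' t = (⌊a⌋ : ℝ) * (f m - f a) := by
      have hcongr : ∀ᵐ t, t ∈ Set.uIoc a m → (⌊t⌋ : ℝ) * f' t = (⌊a⌋ : ℝ) * f' t := by
        have hne : ∀ᵐ t : ℝ, t ≠ m := by
          rw [MeasureTheory.ae_iff]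
          have : {t : ℝ | ¬ t ≠ m} = {m} := by ext t; simp
          rw [this]; exact Real.volume_singleton
        filter_upwards [hne] with t htne ht
        rw [Set.uIoc_of_le ham] at ht
        have htm : t < m := lt_of_le_of_ne ht.2 htne
        have : ⌊t⌋ = ⌊a⌋ := by
          refine le_antisymm ?_ (Int.floor_le_floor ht.1.le)
          have h3 : t < ((⌊a⌋ + 1 : ℤ) : ℝ) := by push_cast; linarith [htm]
          have := Int.floor_lt.mpr h3
          omega
        rw [this]
      rw [intervalIntegral.integral_congr_ae hcongr, intervalIntegral.integral_const_mul,
        intervalIntegral.integral_eq_sub_of_hasDerivAt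
          (fun x hx => hderiv x (hIcc1 (Set.uIcc_of_le ham ▸ hx)))
          ((hcont.mono (fun x hx => hIcc1 (Set.uIcc_of_le ham ▸ hx))).intervalIntegrable)]
    -- second piece by induction
    have hsecond := ih m b hmb (by omega) (fun x hx => hderiv x (hIcc2 hx))
      (hcont.mono hIcc2)
    -- sum splitting
    have hsum : ∑ n ∈ Finset.Ioc ⌊a⌋ ⌊b⌋, f n
        = f m + ∑ n ∈ Finset.Ioc ⌊m⌋ ⌊b⌋, f n := by
      rw [← Finset.Ioc_union_Ioc_eq_Ioc (by omega : ⌊a⌋ ≤ ⌊m⌋) (by omega : ⌊m⌋ ≤ ⌊b⌋),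
        Finset.sum_union (by
          rw [Finset.disjoint_left]
          intro n hn hn'
          simp only [Finset.mem_Ioc] at hn hn'
          omega)]
      congr 1
      have : Finset.Ioc ⌊a⌋ ⌊m⌋ = {⌊a⌋ + 1} := by
        rw [hfm]
        ext n; simp [Finset.mem_Ioc]; omega
      rw [this, Finset.sum_singleton]
      congr 1
      push_cast [hm]; ring
    rw [hfirst, hsecond, hsum, hfm]
    push_cast
    ring

/-- Euler–Maclaurin type summation formula: for `f` with a continuous derivative on `[a,b]`,
`∑_{a < n ≤ b} f n = ∫_a^b f + ∫_a^b {t} f'(t) dt − {b} f b + {a} f a`. -/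
theorem euler_maclaurin_sum (a b : ℝ) (hab : a ≤ b) (f f' : ℝ → ℝ)
    (hderiv : ∀ x ∈ Set.Icc a b, HasDerivAt f (f' x) x)
    (hcont : ContinuousOn f' (Set.Icc a b)) :
    ∑ n ∈ Finset.Ioc ⌊a⌋ ⌊b⌋, f n =
      (∫ t in a..b, f t) + (∫ t in a..b, Int.fract t * f' t)
        - Int.fract b * f b + Int.fract a * f a := by
  have hfl : ⌊b⌋ = ⌊a⌋ + (⌊b⌋ - ⌊a⌋).toNat := by
    have : ⌊a⌋ ≤ ⌊b⌋ := Int.floor_le_floor hab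
    omega
  have hfloor := floor_mul_integral f f' (⌊b⌋ - ⌊a⌋).toNat a b hab hfl hderiv hcont
  have hfcont : ContinuousOn f (Set.Icc a b) := fun x hx =>
    (hderiv x hx).continuousAt.continuousWithinAt
  have hf'int : IntervalIntegrable f' volume a b :=
    (hcont.mono (by rw [Set.uIcc_of_le hab])).intervalIntegrable
  have hfint : IntervalIntegrable f volume a b :=
    (hfcont.mono (by rw [Set.uIcc_of_le hab])).intervalIntegrable
  have hparts : ∫ t in a..b, t * f' t = b * f b - a * f a - ∫ t in a..b, 1 * f t := by
    exact intervalIntegral.integral_mul_deriv_eq_deriv_mul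
      (u := id) (u' := fun _ => (1 : ℝ)) (v := f) (v' := f')
      (fun x _ => hasDerivAt_id x)
      (fun x hx => hderiv x (Set.uIcc_of_le hab ▸ hx))
      intervalIntegrable_const hf'int
  have hifloor : IntervalIntegrable (fun t => (⌊t⌋ : ℝ) * f' t) volume a b :=
    floor_mul_intervalIntegrable a b hab f' hcont
  have hit : IntervalIntegrable (fun t => t * f' t) volume a b := by
    refine ContinuousOn.intervalIntegrable ?_
    rw [Set.uIcc_of_le hab]
    exact continuousOn_id.mul hcont
  have hfract : ∫ t in a..b, Int.fract t * f' t
      = (∫ t in a..b, t * f' t) - ∫ t in a..b, (⌊t⌋ : ℝ) * f' t := by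
    rw [← intervalIntegral.integral_sub hit hifloor]
    refine intervalIntegral.integral_congr fun t _ => ?_
    rw [Int.fract]
    ring
  have hone : ∫ t in a..b, 1 * f t = ∫ t in a..b, f t := by
    refine intervalIntegral.integral_congr fun t _ => ?_
    ring
  rw [hfract, hparts, hfloor, hone, Int.fract, Int.fract]
  ring
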